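/- arXiv:1901.08905 — 2 statements merged into one kernel-verified Lean document; each statement's English description precedes it below -/
import Mathlib

section
/- Every element of the feasibility cone is obtained by rotating the first special solution about h: if h, b ∈ ℝ³ are unit vectors with b ≠ ±h, r₁ = (c, s·(b×h)/‖b×h‖) with c = √((1+⟪b,h⟫)/2), s = √((1−⟪b,h⟫)/2), and q is any unit quaternion satisfying q ⊗ b̌ = ȟ ⊗ q, then there exist reals c', s' with c'² + s'² = 1 such that q = (c', s'·h) ⊗ r₁. -/
/-!
The first special solution `r₁` is itself a unit quaternion with `r₁ ⊗ b̌ = ȟ ⊗ r₁`; this is a direct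
computation from `c² = (1 + ⟪b, h⟫)/2`, `s² = (1 - ⟪b, h⟫)/2` and `2cs = ‖b × h‖`. Hence
`p = q ⊗ r₁⁻¹` is a unit quaternion commuting with `ȟ`. Since the imaginary part of `p ⊗ ȟ - ȟ ⊗ p`
is `2 (im p × h)`, the vector part of `p` is parallel to `h`, i.e. `p = (c', s' h)` with
`c'² + s'² = ‖p‖² = 1`, and `q = p ⊗ r₁`.
-/

open Real Quaternion

theorem Quaternion.exists_im_eq_smul_of_commute {p x : Quaternion ℝ} (hx : x.im ≠ 0)
    (hpx : Commute p x) :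
    ∃ t : ℝ, p.im = t • x.im := by
  have hI := congrArg QuaternionAlgebra.imI hpx.eq
  have hJ := congrArg QuaternionAlgebra.imJ hpx.eq
  have hK := congrArg QuaternionAlgebra.imK hpx.eq
  simp only [imI_mul, imJ_mul, imK_mul] at hI hJ hK
  have hn : x.imI ^ 2 + x.imJ ^ 2 + x.imK ^ 2 ≠ 0 := by
    have := normSq_eq_zero.not.mpr hx
    rwa [normSq_def', re_im, imI_im, imJ_im, imK_im, zero_pow two_ne_zero, zero_add] at this
  refine ⟨(p.imI * x.imI + p.imJ * x.imJ + p.imK * x.imK) / (x.imI ^ 2 + x.imJ ^ 2 + x.imK ^ 2), ?_⟩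
  ext <;> simp only [re_im, imI_im, imJ_im, imK_im, re_smul, imI_smul, imJ_smul, imK_smul,
    smul_eq_mul, mul_zero] <;> field_simp
  · linear_combination (x.imJ / 2) * hK - (x.imK / 2) * hJ
  · linear_combination (x.imK / 2) * hI - (x.imI / 2) * hK
  · linear_combination (x.imI / 2) * hJ - (x.imJ / 2) * hI

theorem Quaternion.exists_eq_mk_of_commute_mk_zero {p : Quaternion ℝ} {h₁ h₂ h₃ : ℝ}
    (hh : h₁^2 + h₂^2 + h₃^2 = 1) (hp : Commute p ⟨0, h₁, h₂, h₃⟩) :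
    ∃ t : ℝ, p = ⟨p.re, t * h₁, t * h₂, t * h₃⟩ := by
  have him : (⟨0, h₁, h₂, h₃⟩ : Quaternion ℝ).im ≠ 0 := by
    intro h0
    have h₁0 : h₁ = 0 := congrArg QuaternionAlgebra.imI h0
    have h₂0 : h₂ = 0 := congrArg QuaternionAlgebra.imJ h0
    have h₃0 : h₃ = 0 := congrArg QuaternionAlgebra.imK h0
    simp [h₁0, h₂0, h₃0] at hh
  obtain ⟨t, ht⟩ := exists_im_eq_smul_of_commute him hp
  refine ⟨t, QuaternionAlgebra.ext rfl ?_ ?_ ?_⟩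
  · rw [← imI_im, ht]; rfl
  · rw [← imJ_im, ht]; rfl
  · rw [← imK_im, ht]; rfl

theorem dot_lt_one_of_ne {h₁ h₂ h₃ b₁ b₂ b₃ : ℝ}
    (hh : h₁^2 + h₂^2 + h₃^2 = 1) (hb : b₁^2 + b₂^2 + b₃^2 = 1)
    (hne : ¬ (b₁ = h₁ ∧ b₂ = h₂ ∧ b₃ = h₃)) :
    b₁*h₁ + b₂*h₂ + b₃*h₃ < 1 := by
  by_contra! hge
  have hdist : (b₁-h₁)^2 + (b₂-h₂)^2 + (b₃-h₃)^2 = 0 := by nlinarith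
  have hsq (x y z : ℝ) (hxyz : x^2 + y^2 + z^2 = 0) : x = 0 := by
    nlinarith [sq_nonneg x, sq_nonneg y, sq_nonneg z]
  refine hne ⟨?_, ?_, ?_⟩ <;> rw [← sub_eq_zero]
  · exact hsq _ _ _ hdist
  · exact hsq (b₂-h₂) (b₁-h₁) (b₃-h₃) (by linear_combination hdist)
  · exact hsq (b₃-h₃) (b₁-h₁) (b₂-h₂) (by linear_combination hdist)

theorem two_mul_sqrt_mul_sqrt_eq_norm_cross {h₁ h₂ h₃ b₁ b₂ b₃ : ℝ}
    (hh : h₁^2 + h₂^2 + h₃^2 = 1) (hb : b₁^2 + b₂^2 + b₃^2 = 1) :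
    2 * √((1 + (b₁*h₁ + b₂*h₂ + b₃*h₃)) / 2) * √((1 - (b₁*h₁ + b₂*h₂ + b₃*h₃)) / 2) =
      √((b₂*h₃ - b₃*h₂)^2 + (b₃*h₁ - b₁*h₃)^2 + (b₁*h₂ - b₂*h₁)^2) := by
  have hplus : 0 ≤ 1 + (b₁*h₁ + b₂*h₂ + b₃*h₃) := by
    nlinarith [sq_nonneg (b₁ + h₁), sq_nonneg (b₂ + h₂), sq_nonneg (b₃ + h₃)]
  have hminus : 0 ≤ 1 - (b₁*h₁ + b₂*h₂ + b₃*h₃) := by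
    nlinarith [sq_nonneg (b₁ - h₁), sq_nonneg (b₂ - h₂), sq_nonneg (b₃ - h₃)]
  rw [← sq_eq_sq₀ (by positivity) (sqrt_nonneg _), mul_pow, mul_pow, sq_sqrt (by positivity),
    sq_sqrt (by positivity), sq_sqrt (by positivity)]
  linear_combination -(b₁^2 + b₂^2 + b₃^2) * hh - hb

theorem semiconjBy_special_solution {h₁ h₂ h₃ b₁ b₂ b₃ c s nu : ℝ}
    (hh : h₁^2 + h₂^2 + h₃^2 = 1) (hb : b₁^2 + b₂^2 + b₃^2 = 1)
    (hc : c^2 = (1 + (b₁*h₁ + b₂*h₂ + b₃*h₃)) / 2) (hcs : 2 * c * s = nu) (hnu : nu ≠ 0) :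
    SemiconjBy (⟨c, s * (b₂*h₃ - b₃*h₂) / nu, s * (b₃*h₁ - b₁*h₃) / nu,
      s * (b₁*h₂ - b₂*h₁) / nu⟩ : Quaternion ℝ) ⟨0, b₁, b₂, b₃⟩ ⟨0, h₁, h₂, h₃⟩ := by
  have hrel : c * nu = s * (1 + (b₁*h₁ + b₂*h₂ + b₃*h₃)) := by
    rw [← hcs]; linear_combination 2 * s * hc
  rw [SemiconjBy, QuaternionAlgebra.mk_mul_mk, QuaternionAlgebra.mk_mul_mk]
  ext <;> dsimp only <;> field_simp
  · ring
  · linear_combination (b₁ - h₁) * hrel + s * h₁ * hb - s * b₁ * hh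
  · linear_combination (b₂ - h₂) * hrel + s * h₂ * hb - s * b₂ * hh
  · linear_combination (b₃ - h₃) * hrel + s * h₃ * hb - s * b₃ * hh

theorem normSq_special_solution {h₁ h₂ h₃ b₁ b₂ b₃ c s nu : ℝ}
    (hh : h₁^2 + h₂^2 + h₃^2 = 1) (hb : b₁^2 + b₂^2 + b₃^2 = 1)
    (hc : c^2 = (1 + (b₁*h₁ + b₂*h₂ + b₃*h₃)) / 2) (hs : s^2 = (1 - (b₁*h₁ + b₂*h₂ + b₃*h₃)) / 2)
    (hcs : 2 * c * s = nu) (hnu : nu ≠ 0) {r : Quaternion ℝ}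
    (hr : r = ⟨c, s * (b₂*h₃ - b₃*h₂) / nu, s * (b₃*h₁ - b₁*h₃) / nu, s * (b₁*h₂ - b₂*h₁) / nu⟩) :
    normSq r = 1 := by
  have hnu2 : nu^2 = 1 - (b₁*h₁ + b₂*h₂ + b₃*h₃)^2 := by
    rw [← hcs]; linear_combination 4 * s^2 * hc + 2 * (1 + (b₁*h₁ + b₂*h₂ + b₃*h₃)) * hs
  have hcross : (b₂*h₃ - b₃*h₂)^2 + (b₃*h₁ - b₁*h₃)^2 + (b₁*h₂ - b₂*h₁)^2 = nu^2 := by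
    rw [hnu2]; linear_combination (b₁^2 + b₂^2 + b₃^2) * hh + hb
  rw [normSq_def', hr]
  field_simp
  linear_combination nu^2 * (hc + hs) + s^2 * hcross

theorem stmt8 (h₁ h₂ h₃ b₁ b₂ b₃ : ℝ)
    (hh : h₁^2 + h₂^2 + h₃^2 = 1) (hb : b₁^2 + b₂^2 + b₃^2 = 1)
    (hne : ¬ (b₁ = h₁ ∧ b₂ = h₂ ∧ b₃ = h₃))
    (hne' : ¬ (b₁ = -h₁ ∧ b₂ = -h₂ ∧ b₃ = -h₃))
    (c s u₁ u₂ u₃ nu : ℝ)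
    (hc : c = sqrt ((1 + (b₁*h₁ + b₂*h₂ + b₃*h₃))/2))
    (hs : s = sqrt ((1 - (b₁*h₁ + b₂*h₂ + b₃*h₃))/2))
    (hu₁ : u₁ = b₂*h₃ - b₃*h₂) (hu₂ : u₂ = b₃*h₁ - b₁*h₃) (hu₃ : u₃ = b₁*h₂ - b₂*h₁)
    (hnu : nu = sqrt (u₁^2 + u₂^2 + u₃^2))
    (r₁ bc hc' : Quaternion ℝ)
    (hr₁ : r₁ = ⟨c, s * u₁ / nu, s * u₂ / nu, s * u₃ / nu⟩)
    (hbc : bc = ⟨0, b₁, b₂, b₃⟩) (hhc : hc' = ⟨0, h₁, h₂, h₃⟩)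
    (q : Quaternion ℝ) (hq : ‖q‖ = 1)
    (hqc : q * bc = hc' * q) :
    ∃ c' s' : ℝ, c'^2 + s'^2 = 1 ∧
      ∃ rot : Quaternion ℝ, rot = ⟨c', s' * h₁, s' * h₂, s' * h₃⟩ ∧ q = rot * r₁ := by
  subst hu₁ hu₂ hu₃
  set d := b₁*h₁ + b₂*h₂ + b₃*h₃
  have hd_lt : d < 1 := dot_lt_one_of_ne hh hb hne
  have hd_gt : -1 < d := by
    have := dot_lt_one_of_ne (b₁ := -b₁) (b₂ := -b₂) (b₃ := -b₃) hh (by linear_combination hb)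
      (by simpa [neg_eq_iff_eq_neg] using hne')
    linarith
  have hc2 : c^2 = (1 + d) / 2 := by rw [hc, sq_sqrt (by linarith)]
  have hs2 : s^2 = (1 - d) / 2 := by rw [hs, sq_sqrt (by linarith)]
  have hcs : 2 * c * s = nu := by rw [hc, hs, hnu]; exact two_mul_sqrt_mul_sqrt_eq_norm_cross hh hb
  have hnu0 : nu ≠ 0 := by
    have : 0 < c := hc ▸ sqrt_pos.mpr (by linarith)
    have : 0 < s := hs ▸ sqrt_pos.mpr (by linarith)
    rw [← hcs]; positivity
  have hr₁_conj : SemiconjBy r₁ bc hc' :=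
    hr₁ ▸ hbc ▸ hhc ▸ semiconjBy_special_solution hh hb hc2 hcs hnu0
  have hr₁_norm : normSq r₁ = 1 := normSq_special_solution hh hb hc2 hs2 hcs hnu0 hr₁
  set p := q * r₁⁻¹
  have hp_comm : Commute p hc' := SemiconjBy.mul_left hqc hr₁_conj.inv_symm_left₀
  have hp_norm : normSq p = 1 := by
    rw [map_mul, map_inv₀, hr₁_norm, normSq_eq_norm_mul_self, hq]; norm_num
  obtain ⟨t, ht⟩ := exists_eq_mk_of_commute_mk_zero hh (hhc ▸ hp_comm)
  refine ⟨p.re, t, ?_, p, ht, ?_⟩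
  · rw [normSq_def', ht] at hp_norm
    dsimp only at hp_norm
    linear_combination hp_norm - t^2 * hh
  · exact (inv_mul_cancel_right₀ (normSq_ne_zero.mp (hr₁_norm ▸ one_ne_zero)) q).symm
end

section
/- Monotone approach to the feasibility cone: let h, k ∈ ℝ³ be unit vectors with ⟪h, k⟫ = 0, let p, q, r be unit quaternions such that q and r lie in the same feasibility cone (r = (c_r, s_r·h) ⊗ q for some c_r² + s_r² = 1 with c_r ≥ 0) and p' (x) = (cos(xΦ/2), sin(xΦ/2)·k) ⊗ p for x ∈ [0,1] with q = p'(1) (i.e., q = (cos(Φ/2), sin(Φ/2)·k) ⊗ p for some Φ ∈ [0, π]). Then the real part of r ⊗ p'(x)⁻¹ equals c_r·cos((1−x)Φ/2), which is monotonically non-decreasing in x on [0,1]; hence the rotation angle from p'(x) to r monotonically decreases as x goes from 0 to 1. -/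
/-!
Right multiplication by the unit quaternion `p` cancels in `r * star (p' x)`, leaving the
product of the `h`-rotation with `rotk 1 * star (rotk x)`, which is the rotation about `k` by half
angle `(1 - x) Φ / 2`. The real part of a product of rotations about orthogonal axes is the product
of their real parts, so it equals `c_r cos ((1 - x) Φ / 2)`, and `cos` is antitone on `[0, π]`.
-/

open Real

namespace Quaternion

def ofAxis (c s v₁ v₂ v₃ : ℝ) : Quaternion ℝ := ⟨c, s * v₁, s * v₂, s * v₃⟩

section ofAxis

variable (c s v₁ v₂ v₃ : ℝ)

@[simp] theorem re_ofAxis : (ofAxis c s v₁ v₂ v₃).re = c := rfl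
@[simp] theorem imI_ofAxis : (ofAxis c s v₁ v₂ v₃).imI = s * v₁ := rfl
@[simp] theorem imJ_ofAxis : (ofAxis c s v₁ v₂ v₃).imJ = s * v₂ := rfl
@[simp] theorem imK_ofAxis : (ofAxis c s v₁ v₂ v₃).imK = s * v₃ := rfl

end ofAxis

theorem mul_star_self_of_norm_eq_one {p : Quaternion ℝ} (hp : ‖p‖ = 1) : p * star p = 1 := by
  rw [self_mul_star, normSq_eq_norm_mul_self, hp, mul_one, coe_one]

theorem ofAxis_mul_star_ofAxis {k₁ k₂ k₃ : ℝ} (hk : k₁ ^ 2 + k₂ ^ 2 + k₃ ^ 2 = 1) (a b : ℝ) :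
    ofAxis (cos a) (sin a) k₁ k₂ k₃ * star (ofAxis (cos b) (sin b) k₁ k₂ k₃) =
      ofAxis (cos (a - b)) (sin (a - b)) k₁ k₂ k₃ := by
  rw [cos_sub, sin_sub]
  ext <;> simp only [re_mul, imI_mul, imJ_mul, imK_mul, re_star, imI_star, imJ_star, imK_star,
    re_ofAxis, imI_ofAxis, imJ_ofAxis, imK_ofAxis]
  · linear_combination (sin a * sin b) * hk
  all_goals ring

theorem re_ofAxis_mul_ofAxis {h₁ h₂ h₃ k₁ k₂ k₃ : ℝ} (hhk : h₁ * k₁ + h₂ * k₂ + h₃ * k₃ = 0)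
    (c s c' s' : ℝ) : (ofAxis c s h₁ h₂ h₃ * ofAxis c' s' k₁ k₂ k₃).re = c * c' := by
  simp only [re_mul, re_ofAxis, imI_ofAxis, imJ_ofAxis, imK_ofAxis]
  linear_combination (-(s * s')) * hhk

end Quaternion

theorem mul_mul_star_mul_cancel {R : Type*} [Monoid R] [StarMul R] {p : R} (hp : p * star p = 1)
    (a b : R) : a * p * star (b * p) = a * star b := by
  rw [star_mul, mul_assoc, ← mul_assoc p, hp, one_mul]

open Quaternion in
theorem stmt17_general (h₁ h₂ h₃ k₁ k₂ k₃ : ℝ)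
    (hk : k₁^2 + k₂^2 + k₃^2 = 1)
    (hhk : h₁*k₁ + h₂*k₂ + h₃*k₃ = 0)
    (p : Quaternion ℝ) (hp : ‖p‖ = 1)
    (Φ : ℝ) (hΦ0 : 0 ≤ Φ) (hΦπ : Φ ≤ π)
    (rotk : ℝ → Quaternion ℝ)
    (hrotk : ∀ x : ℝ, rotk x =
      ⟨cos (x*Φ/2), sin (x*Φ/2) * k₁, sin (x*Φ/2) * k₂, sin (x*Φ/2) * k₃⟩)
    (q : Quaternion ℝ) (hq : q = rotk 1 * p)
    (cr sr : ℝ) (hcr : 0 ≤ cr)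
    (roth r : Quaternion ℝ)
    (hroth : roth = ⟨cr, sr * h₁, sr * h₂, sr * h₃⟩)
    (hr : r = roth * q)
    (p' : ℝ → Quaternion ℝ)
    (hp' : ∀ x : ℝ, p' x = rotk x * p) :
    (∀ x : ℝ, 0 ≤ x → x ≤ 1 → (r * star (p' x)).re = cr * cos ((1-x)*Φ/2)) ∧
    (∀ x y : ℝ, 0 ≤ x → x ≤ y → y ≤ 1 →
      (r * star (p' x)).re ≤ (r * star (p' y)).re) := by
  have hrot : ∀ x, rotk x = ofAxis (cos (x * Φ / 2)) (sin (x * Φ / 2)) k₁ k₂ k₃ := hrotk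
  have hroth' : roth = ofAxis cr sr h₁ h₂ h₃ := hroth
  have re_eq : ∀ x : ℝ, (r * star (p' x)).re = cr * cos ((1 - x) * Φ / 2) := by
    intro x
    have hprod : r * star (p' x) =
        ofAxis cr sr h₁ h₂ h₃ * ofAxis (cos ((1 - x) * Φ / 2)) (sin ((1 - x) * Φ / 2)) k₁ k₂ k₃ := by
      rw [hr, hq, hp', mul_assoc, mul_mul_star_mul_cancel (mul_star_self_of_norm_eq_one hp),
        hrot, hrot, ofAxis_mul_star_ofAxis hk, hroth', ← sub_div, ← sub_mul]
    rw [hprod, re_ofAxis_mul_ofAxis hhk]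
  refine ⟨fun x _ _ => re_eq x, fun x y hx hxy hy1 => ?_⟩
  rw [re_eq x, re_eq y]
  gcongr
  apply cos_le_cos_of_nonneg_of_le_pi <;> nlinarith [pi_pos]

theorem stmt17 (h₁ h₂ h₃ k₁ k₂ k₃ : ℝ)
    (hh : h₁^2 + h₂^2 + h₃^2 = 1) (hk : k₁^2 + k₂^2 + k₃^2 = 1)
    (hhk : h₁*k₁ + h₂*k₂ + h₃*k₃ = 0)
    (p : Quaternion ℝ) (hp : ‖p‖ = 1)
    (Φ : ℝ) (hΦ0 : 0 ≤ Φ) (hΦπ : Φ ≤ π)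
    (rotk : ℝ → Quaternion ℝ)
    (hrotk : ∀ x : ℝ, rotk x =
      ⟨cos (x*Φ/2), sin (x*Φ/2) * k₁, sin (x*Φ/2) * k₂, sin (x*Φ/2) * k₃⟩)
    (q : Quaternion ℝ) (hq : q = rotk 1 * p)
    (cr sr : ℝ) (hcs : cr^2 + sr^2 = 1) (hcr : 0 ≤ cr)
    (roth r : Quaternion ℝ)
    (hroth : roth = ⟨cr, sr * h₁, sr * h₂, sr * h₃⟩)
    (hr : r = roth * q)
    (p' : ℝ → Quaternion ℝ)
    (hp' : ∀ x : ℝ, p' x = rotk x * p) :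
    (∀ x : ℝ, 0 ≤ x → x ≤ 1 → (r * star (p' x)).re = cr * cos ((1-x)*Φ/2)) ∧
    (∀ x y : ℝ, 0 ≤ x → x ≤ y → y ≤ 1 →
      (r * star (p' x)).re ≤ (r * star (p' y)).re) :=
  stmt17_general h₁ h₂ h₃ k₁ k₂ k₃ hk hhk p hp Φ hΦ0 hΦπ rotk hrotk q hq cr sr hcr roth r hroth hr
    p' hp'
end
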